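/- arXiv:2601.00165 — 8 statements merged into one kernel-verified Lean document; each statement's English description precedes it below -/
import Mathlib

section
/- For an odd prime p, the complete graph on the elements of the finite field F_{p^2} can be partitioned into (p^2-1)/4 edge-disjoint subgraphs, each isomorphic to the torus grid graph C_p □ C_p. -/
/-!
Fix a non-square `c ∈ 𝔽_{p²}`; since `-1` is a square there, `-c` is a non-square too. The Klein
four-group generated by `x ↦ -x` and `x ↦ c / x` then acts freely on `𝔽_{p²}ˣ`, so its orbits
`{a, -a, c/a, -c/a}` partition `𝔽_{p²}ˣ` into `(p² - 1) / 4` symmetric sets, and the Cayley graphs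
of `(𝔽_{p²}, +)` with these connection sets partition the edges of the complete graph.
Every element of `𝔽_p` is a square in `𝔽_{p²}`, so `c / a ∉ 𝔽_p a`: the vectors `a` and `c / a`
form an `𝔽_p`-basis of `𝔽_{p²}`, which identifies the Cayley graph on `{±a, ±c/a}` with the
Cayley graph of `(ℤ/p)²` on `{(±1, 0), (0, ±1)}`, that is, with `C_p □ C_p`.
-/

open SimpleGraph Module Finset

namespace SimpleGraph

variable {M N : Type*}

def addCayleyIsoOfImageEq [Add M] [Add N] (φ : M ≃+ N) {s : Set M} {t : Set N}
    (h : φ '' s = t) : addCayley s ≃g addCayley t where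
  toEquiv := φ.toEquiv
  map_rel_iff' {u v} := by
    subst h
    simp [addCayley_adj', ← map_add]

theorem addCayley_union_neg [AddGroup M] (s : Set M) : addCayley (s ∪ -s) = addCayley s := by
  rw [addCayley_union, addCayley_neg, sup_idem]

theorem disjoint_addCayley [AddGroup M] {s t : Set M} (ht : -t = t) (hst : Disjoint s t) :
    Disjoint (addCayley s) (addCayley t) := by
  rw [disjoint_left]
  intro u v hsuv htuv
  rw [addCayley_adj] at hsuv htuv
  have hsymm : -v + u ∈ t ↔ -u + v ∈ t := by rw [← Set.neg_mem_neg, ht, neg_add_rev, neg_neg]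
  rw [hsymm, or_self] at htuv
  rcases hsuv.2 with h | h
  · exact Set.disjoint_left.mp hst h htuv.2
  · exact Set.disjoint_left.mp hst h (hsymm.mpr htuv.2)

theorem addCayley_boxProd [AddGroup M] [AddGroup N] (s : Set M) (t : Set N) :
    (addCayley s).boxProd (addCayley t) = addCayley (s ×ˢ {0} ∪ {0} ×ˢ t) := by
  ext x y
  simp only [boxProd_adj, addCayley_adj, Set.mem_union, Set.mem_prod, Set.mem_singleton_iff,
    Prod.fst_add, Prod.snd_add, Prod.fst_neg, Prod.snd_neg, neg_add_eq_zero, ne_eq, Prod.ext_iff]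
  grind

theorem cycleGraph_eq_addCayley (n : ℕ) [NeZero n] : cycleGraph n = addCayley {1} := by
  rcases n with _ | _ | n
  · exact absurd rfl (NeZero.ne 0)
  · ext u v
    exact iff_of_false (fun h => h.ne (Subsingleton.elim (α := Fin 1) u v))
      (fun h => h.ne (Subsingleton.elim (α := Fin 1) u v))
  · ext u v
    rw [cycleGraph_adj, addCayley_adj]
    simp only [Set.mem_singleton_iff, neg_add_eq_sub]
    constructor
    · rintro (h | h)
      · exact ⟨fun huv => by simp [huv] at h, Or.inr h⟩
      · exact ⟨fun huv => by simp [huv] at h, Or.inl h⟩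
    · exact fun ⟨_, h⟩ => h.symm

theorem nonempty_addCayley_iso_boxProd_cycleGraph (n : ℕ) [NeZero n] :
    Nonempty (addCayley {((1 : ZMod n), (0 : ZMod n)), (0, 1)} ≃g cycleGraph n □ cycleGraph n) := by
  rw [cycleGraph_eq_addCayley, addCayley_boxProd]
  let φ := (ZMod.finEquiv n).toAddEquiv
  refine ⟨(addCayleyIsoOfImageEq (φ.prodCongr φ) ?_).symm⟩
  simp [φ, Set.image_pair, AddEquiv.prodCongr, Set.pair_comm]

theorem nonempty_addCayley_pair_iso {F V : Type*} [Field F] [AddCommGroup V] [Module F V]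
    (hV : finrank F V = 2) {a b : V} (hab : LinearIndependent F ![a, b]) :
    Nonempty (addCayley ({a, b} : Set V) ≃g addCayley ({(1, 0), (0, 1)} : Set (F × F))) := by
  let B := basisOfLinearIndependentOfCardEqFinrank hab (by simp [hV])
  refine ⟨addCayleyIsoOfImageEq (B.equiv (Basis.finTwoProd F) (Equiv.refl _)).toAddEquiv ?_⟩
  have h0 := B.equiv_apply 0 (Basis.finTwoProd F) (Equiv.refl _)
  have h1 := B.equiv_apply 1 (Basis.finTwoProd F) (Equiv.refl _)
  simp_all [B, Set.image_pair]

end SimpleGraph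

theorem isSquare_algebraMap_of_finrank_eq_two {F L : Type*} [Field F] [Fintype F] [Field L]
    [Fintype L] [Algebra F L] (hL : ringChar L ≠ 2) (h : finrank F L = 2) (x : F) :
    IsSquare (algebraMap F L x) := by
  rcases eq_or_ne x 0 with rfl | hx
  · simp
  obtain ⟨t, ht⟩ :=
    Nat.odd_iff.mpr (FiniteField.odd_card_of_char_ne_two (Algebra.ringChar_eq F L ▸ hL))
  -- Euler's criterion: `q² / 2 = (q - 1) * ((q + 1) / 2)` is a multiple of `q - 1`.
  have hcard : Fintype.card L / 2 = (Fintype.card F - 1) * (t + 1) := by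
    rw [Module.card_eq_pow_finrank (K := F), h, ht, Nat.add_sub_cancel,
      show (2 * t + 1) ^ 2 = 2 * (2 * t * (t + 1)) + 1 by ring, Nat.mul_add_div two_pos,
      Nat.div_eq_of_lt one_lt_two, add_zero]
  rw [FiniteField.isSquare_iff hL (by simpa using hx), hcard, pow_mul, ← map_pow,
    FiniteField.pow_card_sub_one_eq_one x hx, map_one, one_pow]

theorem LinearIndependent.pair_div_of_not_isSquare {F L : Type*} [Field F] [Field L]
    [Algebra F L] (hF : ∀ x : F, IsSquare (algebraMap F L x)) {c a : L} (hc : ¬IsSquare c)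
    (ha : a ≠ 0) : LinearIndependent F ![a, c / a] := by
  rw [LinearIndependent.pair_iff' ha]
  intro z hz
  obtain ⟨r, hr⟩ := hF z
  refine hc ⟨r * a, ?_⟩
  rw [Algebra.smul_def, hr, eq_div_iff ha] at hz
  rw [← hz]
  ring

section KleinOrbit

variable {K : Type*} [Field K] [DecidableEq K] (c : K)

def kleinOrbit (a : K) : Finset K := {a, -a, c / a, -(c / a)}

variable {c}

theorem mem_kleinOrbit_self (a : K) : a ∈ kleinOrbit c a := mem_insert_self _ _

theorem coe_kleinOrbit (a : K) : (kleinOrbit c a : Set K) = {a, c / a} ∪ -{a, c / a} := by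
  ext x
  simp [kleinOrbit]
  tauto

theorem neg_coe_kleinOrbit (a : K) : -(kleinOrbit c a : Set K) = kleinOrbit c a := by
  rw [coe_kleinOrbit, Set.union_neg, neg_neg, Set.union_comm]

theorem kleinOrbit_eq_of_mem (hc : c ≠ 0) {a d : K} (h : d ∈ kleinOrbit c a) :
    kleinOrbit c d = kleinOrbit c a := by
  simp only [kleinOrbit, mem_insert, mem_singleton] at h
  rcases h with rfl | rfl | rfl | rfl <;> ext x <;>
    simp [kleinOrbit, div_neg, div_div_cancel₀ hc] <;> tauto

theorem ne_zero_of_mem_kleinOrbit (hc : c ≠ 0) {a d : K} (ha : a ≠ 0) (h : d ∈ kleinOrbit c a) :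
    d ≠ 0 := by
  simp only [kleinOrbit, mem_insert, mem_singleton] at h
  rcases h with rfl | rfl | rfl | rfl <;> simp [ha, hc]

theorem card_kleinOrbit (hK : ringChar K ≠ 2) (hc : ¬IsSquare c) (hc' : ¬IsSquare (-c)) {a : K}
    (ha : a ≠ 0) : #(kleinOrbit c a) = 4 := by
  have ne_neg : ∀ x : K, x ≠ 0 → x ≠ -x := fun x hx h =>
    hx ((Ring.eq_self_iff_eq_zero_of_char_ne_two hK).mp h.symm)
  have hca : c / a ≠ 0 := div_ne_zero (fun h => hc (h ▸ IsSquare.zero)) ha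
  have hsq : a ≠ c / a := fun h => hc ⟨a, ((eq_div_iff ha).mp h).symm⟩
  have hsq' : a ≠ -(c / a) := fun h =>
    hc' ⟨a, ((eq_div_iff ha).mp (h.trans (neg_div a c).symm)).symm⟩
  exact card_eq_four.mpr ⟨a, -a, c / a, -(c / a), ne_neg a ha, hsq, hsq',
    fun h => hsq' (neg_eq_iff_eq_neg.mp h), fun h => hsq (neg_inj.mp h), ne_neg _ hca, rfl⟩

theorem nonempty_addCayley_kleinOrbit_iso {F : Type*} [Field F] [Algebra F K]
    (hK : finrank F K = 2) (hF : ∀ x : F, IsSquare (algebraMap F K x)) (hc : ¬IsSquare c)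
    {a : K} (ha : a ≠ 0) :
    Nonempty (addCayley (kleinOrbit c a : Set K) ≃g addCayley {((1 : F), (0 : F)), (0, 1)}) := by
  rw [coe_kleinOrbit, addCayley_union_neg]
  exact nonempty_addCayley_pair_iso hK (.pair_div_of_not_isSquare hF hc ha)

variable [Fintype K] (c) in
def kleinOrbits : Finset (Finset K) := (univ.erase 0).image (kleinOrbit c)

variable [Fintype K]

theorem pairwiseDisjoint_kleinOrbits (hc : c ≠ 0) :
    (kleinOrbits c : Set (Finset K)).PairwiseDisjoint id := by
  simp only [kleinOrbits, coe_image]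
  rintro _ ⟨a, -, rfl⟩ _ ⟨b, -, rfl⟩ hab
  refine disjoint_left.mpr fun d hda hdb => hab ?_
  rw [← kleinOrbit_eq_of_mem hc hda, kleinOrbit_eq_of_mem hc hdb]

theorem biUnion_kleinOrbits (hc : c ≠ 0) : (kleinOrbits c).biUnion id = univ.erase 0 := by
  ext d
  simp only [kleinOrbits, mem_biUnion, mem_image, mem_erase, mem_univ, and_true, id]
  constructor
  · rintro ⟨_, ⟨a, ha, rfl⟩, hd⟩
    exact ne_zero_of_mem_kleinOrbit hc ha hd
  · exact fun hd => ⟨_, ⟨d, hd, rfl⟩, mem_kleinOrbit_self d⟩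

theorem card_kleinOrbits (hK : ringChar K ≠ 2) (hc : ¬IsSquare c) (hc' : ¬IsSquare (-c)) :
    4 * #(kleinOrbits c) = Fintype.card K - 1 := by
  have hc0 : c ≠ 0 := fun h => hc (h ▸ IsSquare.zero)
  rw [← card_univ, ← card_erase_of_mem (mem_univ 0), ← biUnion_kleinOrbits hc0,
    card_biUnion (pairwiseDisjoint_kleinOrbits hc0), mul_comm, ← smul_eq_mul, ← sum_const]
  refine sum_congr rfl fun O hO => ?_
  obtain ⟨a, ha, rfl⟩ := mem_image.mp hO
  exact (card_kleinOrbit hK hc hc' (ne_of_mem_erase ha)).symm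

theorem pairwise_disjoint_addCayley_kleinOrbits (hc : c ≠ 0) :
    Pairwise fun O O' : kleinOrbits c =>
      Disjoint (addCayley (O : Set K)) (addCayley (O' : Set K)) := by
  rintro ⟨O, hO⟩ ⟨O', hO'⟩ hne
  have hdisj := pairwiseDisjoint_kleinOrbits hc hO hO' (Subtype.coe_injective.ne hne)
  obtain ⟨a, -, rfl⟩ := mem_image.mp hO'
  exact disjoint_addCayley (neg_coe_kleinOrbit a) (disjoint_coe.mpr hdisj)

theorem iSup_addCayley_kleinOrbits (hc : c ≠ 0) :
    ⨆ O : kleinOrbits c, addCayley (O : Set K) = ⊤ := by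
  rw [← (addCayley_gc K).l_iSup, ← addCayley_compl_singleton_zero]
  congr 1
  ext d
  simpa using congrArg (d ∈ ·) (biUnion_kleinOrbits hc)

end KleinOrbit

theorem torus_design_prime (p : ℕ) [Fact p.Prime] (hodd : Odd p) :
    ∃ f : Fin ((p ^ 2 - 1) / 4) → SimpleGraph (GaloisField p 2),
      (∀ i, Nonempty (f i ≃g (SimpleGraph.cycleGraph p □ SimpleGraph.cycleGraph p))) ∧
      (Pairwise fun i j => Disjoint (f i) (f j)) ∧
      (⨆ i, f i) = ⊤ := by
  classical
  let : Fintype (GaloisField p 2) := Fintype.ofFinite _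
  have hrank := GaloisField.finrank p two_ne_zero
  have hchar : ringChar (GaloisField p 2) ≠ 2 := by
    rw [ringChar.eq (GaloisField p 2) p]
    exact hodd.ne_two_of_dvd_nat dvd_rfl
  have hsq := isSquare_algebraMap_of_finrank_eq_two hchar hrank
  obtain ⟨c, hc⟩ := FiniteField.exists_nonsquare hchar
  have hc0 : c ≠ 0 := fun h => hc (h ▸ IsSquare.zero)
  have hc' : ¬IsSquare (-c) := fun h => hc (by simpa using (hsq (-1)).mul h)
  have hcard : #(kleinOrbits c) = (p ^ 2 - 1) / 4 := by
    have := card_kleinOrbits hchar hc hc'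
    rw [← Nat.card_eq_fintype_card, GaloisField.card p 2 two_ne_zero] at this
    omega
  let e := (kleinOrbits c).equivFin.trans (finCongr hcard)
  refine ⟨fun i => addCayley (e.symm i : Set _), fun i => ?_,
    (pairwise_disjoint_addCayley_kleinOrbits hc0).comp_of_injective e.symm.injective, ?_⟩
  · obtain ⟨a, ha, hO⟩ := mem_image.mp (e.symm i).2
    obtain ⟨φ⟩ := nonempty_addCayley_kleinOrbit_iso hrank hsq hc (ne_of_mem_erase ha)
    obtain ⟨ψ⟩ := nonempty_addCayley_iso_boxProd_cycleGraph p
    simpa only [← hO] using ⟨φ.trans ψ⟩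
  · exact e.symm.iSup_comp.trans (iSup_addCayley_kleinOrbits hc0)
end

section
/- For an odd prime p, the complete graph K_{p^4} can be partitioned into (p^4-1)/4 edge-disjoint subgraphs each isomorphic to C_{p^2} □ C_{p^2}. -/
/-!
Let `n = 2m + 1` be odd. Walecki's construction splits `K_n` into `m` Hamiltonian cycles: on the
vertices `ZMod (2m) ∪ {∞}`, the cycle `H_k` is `∞, k, k + 1, k - 1, k + 2, …, k + m, ∞`, and the
edge `uv` lies in `H_k` exactly when `u + v ∈ {2k, 2k + 1}`. An edge of `K_{n²} = K_n × K_n`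
either moves one coordinate along an edge of some `H_k` and fixes the other, and then lies in
`H_k □ H_k`, or moves both, along `H_k` and `H_l`, and then lies in the tensor product `H_k × H_l`.
These `m + m² = (n² - 1) / 4` graphs are all tori: for odd `n`, `(a, b) ↦ (a + b, a - b)` is an
isomorphism `C_n □ C_n ≃ C_n × C_n`. Take `n = p²`.
-/

open SimpleGraph

namespace SimpleGraph

variable {V W ι κ : Type*}

def IsEdgePartitionOfTop (f : ι → SimpleGraph V) : Prop :=
  ∀ ⦃x y : V⦄, x ≠ y → ∃! i, (f i).Adj x y

namespace IsEdgePartitionOfTop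

variable {f : ι → SimpleGraph V}

theorem pairwise_disjoint (hf : IsEdgePartitionOfTop f) :
    Pairwise fun i j => Disjoint (f i) (f j) := by
  intro i j hij
  rw [disjoint_iff_inf_le]
  intro x y ⟨hi, hj⟩
  exact hij ((hf hi.ne).unique hi hj)

theorem iSup_eq_top (hf : IsEdgePartitionOfTop f) : ⨆ i, f i = ⊤ := by
  ext x y
  simp only [iSup_adj, top_adj]
  exact ⟨fun ⟨i, h⟩ => h.ne, fun h => (hf h).exists⟩

theorem comap (hf : IsEdgePartitionOfTop f) (e : W ≃ V) :
    IsEdgePartitionOfTop fun i => (f i).comap e := fun _ _ h => hf (e.injective.ne h)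

theorem comp_equiv (hf : IsEdgePartitionOfTop f) (e : κ ≃ ι) :
    IsEdgePartitionOfTop (f ∘ e) := by
  intro x y h
  obtain ⟨i, hi, hu⟩ := hf h
  exact ⟨e.symm i, by simpa using hi, fun j hj => e.eq_symm_apply.2 (hu _ hj)⟩

theorem exists_fin_of_card_eq [Fintype V] [Fintype ι] (hf : IsEdgePartitionOfTop f)
    {U : Type*} {G : SimpleGraph U} (hG : ∀ i, Nonempty (f i ≃g G)) {N M : ℕ}
    (hV : Fintype.card V = N) (hι : Fintype.card ι = M) :
    ∃ g : Fin M → SimpleGraph (Fin N), (∀ i, Nonempty (g i ≃g G)) ∧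
      (Pairwise fun i j => Disjoint (g i) (g j)) ∧ (⨆ i, g i) = ⊤ := by
  let eV := (Fintype.equivFinOfCardEq hV).symm
  let eι := (Fintype.equivFinOfCardEq hι).symm
  have h := (hf.comp_equiv eι).comap eV
  exact ⟨_, fun i => ⟨(Iso.comap eV _).trans (hG (eι i)).some⟩, h.pairwise_disjoint,
    h.iSup_eq_top⟩

end IsEdgePartitionOfTop

def tensorProd (G : SimpleGraph V) (H : SimpleGraph W) : SimpleGraph (V × W) where
  Adj a b := G.Adj a.1 b.1 ∧ H.Adj a.2 b.2
  symm := ⟨fun _ _ h => ⟨h.1.symm, h.2.symm⟩⟩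
  loopless := ⟨fun a h => G.loopless.irrefl a.1 h.1⟩

@[simp] theorem tensorProd_adj (G : SimpleGraph V) (H : SimpleGraph W) (a b : V × W) :
    (tensorProd G H).Adj a b ↔ G.Adj a.1 b.1 ∧ H.Adj a.2 b.2 := Iff.rfl

def boxTensorFamily (f : κ → SimpleGraph V) : κ ⊕ κ × κ → SimpleGraph (V × V)
  | .inl k => f k □ f k
  | .inr (k, l) => tensorProd (f k) (f l)

theorem IsEdgePartitionOfTop.boxTensorFamily {f : κ → SimpleGraph V}
    (hf : IsEdgePartitionOfTop f) :
    IsEdgePartitionOfTop (boxTensorFamily f) := by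
  rintro ⟨x₁, x₂⟩ ⟨y₁, y₂⟩ hne
  by_cases h₁ : x₁ = y₁
  · subst h₁
    obtain ⟨k, hk, hu⟩ := hf (x := x₂) (y := y₂) fun h => hne (by rw [h])
    refine ⟨.inl k, by simp [SimpleGraph.boxTensorFamily, hk], ?_⟩
    rintro (k' | ⟨k', l'⟩) h
    · simp only [SimpleGraph.boxTensorFamily, boxProd_adj, SimpleGraph.irrefl, false_and,
        and_true, false_or] at h
      rw [hu _ h]
    · exact absurd h.1 (SimpleGraph.irrefl _)
  by_cases h₂ : x₂ = y₂
  · subst h₂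
    obtain ⟨k, hk, hu⟩ := hf h₁
    refine ⟨.inl k, by simp [SimpleGraph.boxTensorFamily, hk], ?_⟩
    rintro (k' | ⟨k', l'⟩) h
    · simp only [SimpleGraph.boxTensorFamily, boxProd_adj, SimpleGraph.irrefl, false_and,
        and_true, or_false] at h
      rw [hu _ h]
    · exact absurd h.2 (SimpleGraph.irrefl _)
  obtain ⟨k, hk, hku⟩ := hf h₁
  obtain ⟨l, hl, hlu⟩ := hf h₂
  refine ⟨.inr (k, l), ⟨hk, hl⟩, ?_⟩
  rintro (k' | ⟨k', l'⟩) h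
  · simp [SimpleGraph.boxTensorFamily, h₁, h₂] at h
  · rw [hku _ h.1, hlu _ h.2]

variable {V' W' : Type*} {G : SimpleGraph V} {G' : SimpleGraph V'} {H : SimpleGraph W}
  {H' : SimpleGraph W'}

def Iso.boxProdCongr (e₁ : G ≃g G') (e₂ : H ≃g H') : G.boxProd H ≃g G'.boxProd H' where
  toEquiv := e₁.toEquiv.prodCongr e₂.toEquiv
  map_rel_iff' := or_congr (and_congr e₁.map_adj_iff e₂.injective.eq_iff)
    (and_congr e₂.map_adj_iff e₁.injective.eq_iff)

def Iso.tensorProdCongr (e₁ : G ≃g G') (e₂ : H ≃g H') :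
    tensorProd G H ≃g tensorProd G' H' where
  toEquiv := e₁.toEquiv.prodCongr e₂.toEquiv
  map_rel_iff' := and_congr e₁.map_adj_iff e₂.map_adj_iff

section Circulant

variable {R : Type*} [CommRing R] [Nontrivial R]

theorem circulantGraph_one_adj {u v : R} :
    (circulantGraph ({1} : Set R)).Adj u v ↔ v - u = 1 ∨ v - u = -1 := by
  rw [circulantGraph_adj, and_iff_right_iff_imp.2, or_comm, ← neg_sub v u]
  · simp only [Set.mem_singleton_iff, neg_eq_iff_eq_neg]
  rintro (h | h) rfl <;> simp at h

theorem circulantGraph_one_boxProd_adj_iff_tensorProd_adj (h2 : IsUnit (2 : R)) (a b c d : R) :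
    ((circulantGraph {1}).boxProd (circulantGraph {1})).Adj (a, b) (c, d) ↔
      (tensorProd (circulantGraph {1}) (circulantGraph {1})).Adj
        (a + b, a - b) (c + d, c - d) := by
  simp only [boxProd_adj, tensorProd_adj, circulantGraph_one_adj]
  have hs : c + d - (a + b) = (c - a) + (d - b) := by ring
  have hd : c - d - (a - b) = (c - a) - (d - b) := by ring
  rw [hs, hd, eq_comm (a := b), ← sub_eq_zero (a := d), eq_comm (a := a),
    ← sub_eq_zero (a := c)]
  generalize c - a = s, d - b = t
  have cancel : ∀ x : R, 2 * x = 0 → x = 0 := fun x hx => h2.mul_right_eq_zero.1 hx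
  constructor
  · rintro (⟨hs | hs, ht⟩ | ⟨ht | ht, hs⟩) <;> simp [hs, ht]
  · rintro ⟨hp | hp, hm | hm⟩
    · have ht := cancel t (by linear_combination hp - hm)
      exact .inl ⟨.inl (by linear_combination hp - ht), ht⟩
    · have hs := cancel s (by linear_combination hp + hm)
      exact .inr ⟨.inl (by linear_combination hp - hs), hs⟩
    · have hs := cancel s (by linear_combination hp + hm)
      exact .inr ⟨.inr (by linear_combination hp - hs), hs⟩
    · have ht := cancel t (by linear_combination hp - hm)
      exact .inl ⟨.inr (by linear_combination hp - ht), ht⟩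

noncomputable def circulantGraphOneBoxProdIsoTensorProd (h2 : IsUnit (2 : R)) :
    (circulantGraph ({1} : Set R)).boxProd (circulantGraph ({1} : Set R)) ≃g
      tensorProd (circulantGraph ({1} : Set R)) (circulantGraph ({1} : Set R)) where
  toFun x := (x.1 + x.2, x.1 - x.2)
  invFun y := (h2.unit⁻¹ * (y.1 + y.2), h2.unit⁻¹ * (y.1 - y.2))
  left_inv x := Prod.ext (by linear_combination x.1 * h2.val_inv_mul)
    (by linear_combination x.2 * h2.val_inv_mul)
  right_inv y := Prod.ext (by linear_combination y.1 * h2.val_inv_mul)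
    (by linear_combination y.2 * h2.val_inv_mul)
  map_rel_iff' {x y} := (circulantGraph_one_boxProd_adj_iff_tensorProd_adj h2 x.1 x.2 y.1 y.2).symm

end Circulant

def cycleGraphIsoCirculantGraph (n : ℕ) :
    cycleGraph (n + 1) ≃g circulantGraph ({1} : Set (ZMod (n + 1))) := by
  rw [cycleGraph_eq_circulantGraph]
  exact {
    toEquiv := (ZMod.finEquiv (n + 1)).toEquiv
    map_rel_iff' := by simp [← map_sub] }

end SimpleGraph

namespace Walecki

variable (m : ℕ)

/-- The sequence `0, 1, -1, 2, -2, …`. -/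
def zigzag (j : ℕ) : ZMod (2 * m) := if Even j then -↑(j / 2) else ↑(j / 2 + 1)

theorem zigzag_two_mul (t : ℕ) : zigzag m (2 * t) = -t := by
  simp [zigzag]

theorem zigzag_two_mul_add_one (t : ℕ) : zigzag m (2 * t + 1) = t + 1 := by
  simp [zigzag, show (2 * t + 1) / 2 = t by omega]

theorem zigzag_two_mul_sub_one [NeZero m] : zigzag m (2 * m - 1) = m := by
  obtain ⟨n, rfl⟩ := Nat.exists_eq_succ_of_ne_zero (NeZero.ne m)
  simpa [show 2 * (n + 1) - 1 = 2 * n + 1 by omega] using zigzag_two_mul_add_one _ n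

theorem zigzag_add_zigzag_succ (j : ℕ) :
    zigzag m j + zigzag m (j + 1) = ((j + 1) % 2 : ℕ) := by
  obtain ⟨t, rfl | rfl⟩ := Nat.even_or_odd' j
  · rw [zigzag_two_mul, zigzag_two_mul_add_one, show (2 * t + 1) % 2 = 1 by omega]; simp
  · rw [zigzag_two_mul_add_one, show 2 * t + 1 + 1 = 2 * (t + 1) by ring, zigzag_two_mul,
      Nat.mul_mod_right]; push_cast; ring

theorem exists_zigzag_eq [NeZero m] (w : ZMod (2 * m)) : ∃ j < 2 * m, zigzag m j = w := by
  have hm := NeZero.ne m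
  have hw : w.val < 2 * m := w.val_lt
  rcases Nat.eq_zero_or_pos w.val with h0 | h0
  · exact ⟨0, by omega, by simpa [zigzag_two_mul m 0] using ((ZMod.val_eq_zero w).1 h0).symm⟩
  rcases le_or_gt w.val m with hle | hgt
  · refine ⟨2 * (w.val - 1) + 1, by omega, ?_⟩
    rw [zigzag_two_mul_add_one, ← Nat.cast_add_one, Nat.sub_add_cancel h0, ZMod.natCast_zmod_val]
  · refine ⟨2 * (2 * m - w.val), by omega, ?_⟩
    rw [zigzag_two_mul, Nat.cast_sub hw.le, ZMod.natCast_self, ZMod.natCast_zmod_val, zero_sub,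
      neg_neg]

theorem exists_zigzag_consecutive [NeZero m] {a b : ZMod (2 * m)} (hab : a ≠ b)
    (hsum : a + b = 0 ∨ a + b = 1) :
    ∃ j, j + 1 < 2 * m ∧
      (zigzag m j = a ∧ zigzag m (j + 1) = b ∨ zigzag m j = b ∧ zigzag m (j + 1) = a) := by
  obtain ⟨i, hi, rfl⟩ := exists_zigzag_eq m a
  obtain ⟨t, rfl | rfl⟩ := Nat.even_or_odd' i
  · have ha := zigzag_two_mul m t
    rcases hsum with hsum | hsum
    · obtain _ | s := t
      · exact absurd (by push_cast at ha; linear_combination 2 * ha - hsum) hab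
      refine ⟨2 * s + 1, by omega,
        .inr ⟨?_, by rw [show 2 * s + 1 + 1 = 2 * (s + 1) by ring]⟩⟩
      rw [zigzag_two_mul_add_one]; push_cast at ha; linear_combination ha - hsum
    · refine ⟨2 * t, by omega, .inl ⟨rfl, ?_⟩⟩
      rw [zigzag_two_mul_add_one]; linear_combination ha - hsum
  · have ha := zigzag_two_mul_add_one m t
    rcases hsum with hsum | hsum
    · -- `a = m` would force `b = -m = a`
      have ht : t + 1 < m := by
        refine lt_of_le_of_ne (by omega) fun ht => hab ?_
        have h2m : ((2 * (t + 1) : ℕ) : ZMod (2 * m)) = 0 := by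
          rw [ht]; exact ZMod.natCast_self _
        push_cast at h2m
        linear_combination 2 * ha - hsum + h2m
      refine ⟨2 * t + 1, by omega, .inl ⟨rfl, ?_⟩⟩
      rw [show 2 * t + 1 + 1 = 2 * (t + 1) by ring, zigzag_two_mul]; push_cast
      linear_combination ha - hsum
    · refine ⟨2 * t, by omega, .inr ⟨?_, rfl⟩⟩
      rw [zigzag_two_mul]; linear_combination ha - hsum

/-- The vertex at position `r` of the `k`-th Walecki cycle; `none` is the vertex `∞`. -/
def label (k : Fin m) (r : ZMod (2 * m + 1)) : Option (ZMod (2 * m)) :=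
  match r.val with
  | 0 => none
  | j + 1 => some ((k : ℕ) + zigzag m j)

variable {m}

theorem label_zero (k : Fin m) : label m k 0 = none := by
  simp [label]

theorem label_natCast_add_one (k : Fin m) {j : ℕ} (hj : j < 2 * m) :
    label m k ((j + 1 : ℕ)) = some ((k : ℕ) + zigzag m j) := by
  simp only [label, ZMod.val_cast_of_lt (show j + 1 < 2 * m + 1 by omega)]

theorem natCast_two_mul_add_one : ((2 * m : ℕ) : ZMod (2 * m + 1)) + 1 = 0 := by
  exact_mod_cast ZMod.natCast_self (2 * m + 1)

variable (m) in
def cycleIndex : Option (ZMod (2 * m)) → Option (ZMod (2 * m)) → ℕ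
  | some u, some v => (u + v).val / 2
  | some u, none | none, some u => u.val % m
  | none, none => 0

theorem cycleIndex_comm (x y : Option (ZMod (2 * m))) :
    cycleIndex m x y = cycleIndex m y x := by
  rcases x with _ | u <;> rcases y with _ | v <;> simp [cycleIndex, add_comm]

variable [NeZero m]

instance fact_one_lt_two_mul_add_one : Fact (1 < 2 * m + 1) := ⟨by have := NeZero.ne m; omega⟩

theorem label_one (k : Fin m) : label m k 1 = some ((k : ℕ) : ZMod (2 * m)) := by
  simpa [zigzag_two_mul m 0] using
    label_natCast_add_one k (j := 0) (by have := NeZero.ne m; omega)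

theorem label_two_mul (k : Fin m) :
    label m k ((2 * m : ℕ)) = some (((k : ℕ) : ZMod (2 * m)) + m) := by
  have hm := NeZero.ne m
  rw [← zigzag_two_mul_sub_one, ← label_natCast_add_one k (by omega),
    Nat.sub_add_cancel (by omega)]

theorem label_surjective (k : Fin m) : Function.Surjective (label m k) := by
  rintro (_ | w)
  · exact ⟨0, label_zero k⟩
  · obtain ⟨j, hj, hz⟩ := exists_zigzag_eq m (w - (k : ℕ))
    exact ⟨(j + 1 : ℕ), by rw [label_natCast_add_one k hj, hz, add_sub_cancel]⟩

variable (m) in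
noncomputable def labelEquiv (k : Fin m) : ZMod (2 * m + 1) ≃ Option (ZMod (2 * m)) :=
  .ofBijective (label m k) <| (Fintype.bijective_iff_surjective_and_card _).2
    ⟨label_surjective k, by simp⟩

variable (m) in
noncomputable def waleckiCycle (k : Fin m) : SimpleGraph (Option (ZMod (2 * m))) :=
  (circulantGraph ({1} : Set (ZMod (2 * m + 1)))).map (labelEquiv m k)

noncomputable def circulantGraphIsoWaleckiCycle (k : Fin m) :
    circulantGraph ({1} : Set (ZMod (2 * m + 1))) ≃g waleckiCycle m k :=
  Iso.map (labelEquiv m k) _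

theorem waleckiCycle_adj_label_add_one (k : Fin m) (r : ZMod (2 * m + 1)) :
    (waleckiCycle m k).Adj (label m k r) (label m k (r + 1)) :=
  (circulantGraphIsoWaleckiCycle k).map_adj_iff.2 (circulantGraph_one_adj.2 (.inl (by ring)))

theorem waleckiCycle_adj_zigzag (k : Fin m) {j : ℕ} (hj : j + 1 < 2 * m) :
    (waleckiCycle m k).Adj (some ((k : ℕ) + zigzag m j))
      (some ((k : ℕ) + zigzag m (j + 1))) := by
  rw [← label_natCast_add_one k (by omega), ← label_natCast_add_one k hj, Nat.cast_succ (j + 1)]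
  exact waleckiCycle_adj_label_add_one k _

theorem cycleIndex_label_add_one (k : Fin m) (r : ZMod (2 * m + 1)) :
    cycleIndex m (label m k r) (label m k (r + 1)) = k := by
  have hk := k.isLt
  obtain ⟨i, hi, rfl⟩ : ∃ i < 2 * m + 1, (i : ZMod (2 * m + 1)) = r :=
    ⟨r.val, r.val_lt, ZMod.natCast_zmod_val r⟩
  rcases Nat.lt_succ_iff_lt_or_eq.1 hi with hi | rfl
  · obtain _ | j := i
    · rw [Nat.cast_zero, label_zero, zero_add, label_one]
      simp [cycleIndex, ZMod.val_cast_of_lt (show (k : ℕ) < 2 * m by omega), Nat.mod_eq_of_lt hk]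
    · rw [label_natCast_add_one k (by omega), ← Nat.cast_succ, label_natCast_add_one k hi]
      have hsum : ((k : ℕ) + zigzag m j + ((k : ℕ) + zigzag m (j + 1)) : ZMod (2 * m)) =
          ((2 * k + (j + 1) % 2 : ℕ) : ZMod (2 * m)) := by
        push_cast; linear_combination zigzag_add_zigzag_succ m j
      simp only [cycleIndex, hsum,
        ZMod.val_cast_of_lt (show 2 * k + (j + 1) % 2 < 2 * m by omega)]
      omega
  · rw [natCast_two_mul_add_one, label_two_mul, label_zero]
    simp only [cycleIndex]
    rw [← Nat.cast_add, ZMod.val_cast_of_lt (by omega), Nat.add_mod_right, Nat.mod_eq_of_lt hk]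

theorem exists_waleckiCycle_adj_none_some (u : ZMod (2 * m)) :
    ∃ k, (waleckiCycle m k).Adj none (some u) := by
  have hu := u.val_lt
  by_cases hlt : u.val < m
  · refine ⟨⟨u.val, hlt⟩, ?_⟩
    have := waleckiCycle_adj_label_add_one ⟨u.val, hlt⟩ 0
    rwa [label_zero, zero_add, label_one, Fin.val_mk, ZMod.natCast_zmod_val] at this
  · let k : Fin m := ⟨u.val - m, by omega⟩
    refine ⟨k, ?_⟩
    have := (waleckiCycle_adj_label_add_one k (2 * m : ℕ)).symm
    rwa [natCast_two_mul_add_one, label_zero, label_two_mul, Fin.val_mk, ← Nat.cast_add,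
      Nat.sub_add_cancel (by omega), ZMod.natCast_zmod_val] at this

theorem exists_waleckiCycle_adj_some_some {u v : ZMod (2 * m)} (h : u ≠ v) :
    ∃ k, (waleckiCycle m k).Adj (some u) (some v) := by
  set s := (u + v).val
  have hs : s < 2 * m := ZMod.val_lt _
  set k : Fin m := ⟨s / 2, by omega⟩
  have huv : u + v = ((2 * (s / 2) + s % 2 : ℕ) : ZMod (2 * m)) := by
    rw [Nat.div_add_mod, ZMod.natCast_zmod_val]
  have hsum : (u - (k : ℕ)) + (v - (k : ℕ)) = 0 ∨ (u - (k : ℕ)) + (v - (k : ℕ)) = 1 := by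
    rcases Nat.mod_two_eq_zero_or_one s with h2 | h2 <;> rw [h2] at huv <;> push_cast at huv
    · exact .inl (by linear_combination huv)
    · exact .inr (by linear_combination huv)
  obtain ⟨j, hj, hz | hz⟩ := exists_zigzag_consecutive m (sub_left_injective.ne h) hsum
  all_goals
    refine ⟨k, ?_⟩
    have := waleckiCycle_adj_zigzag k hj
    rw [hz.1, hz.2, add_sub_cancel, add_sub_cancel] at this
  exacts [this, this.symm]

theorem exists_waleckiCycle_adj {x y : Option (ZMod (2 * m))} (h : x ≠ y) :
    ∃ k, (waleckiCycle m k).Adj x y := by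
  rcases x with _ | u <;> rcases y with _ | v
  · exact absurd rfl h
  · exact exists_waleckiCycle_adj_none_some v
  · exact (exists_waleckiCycle_adj_none_some u).imp fun _ h => h.symm
  · exact exists_waleckiCycle_adj_some_some fun e => h (congrArg some e)

theorem cycleIndex_eq_of_adj {k : Fin m} {x y : Option (ZMod (2 * m))}
    (h : (waleckiCycle m k).Adj x y) : cycleIndex m x y = k := by
  obtain ⟨a, rfl⟩ := (labelEquiv m k).surjective x
  obtain ⟨b, rfl⟩ := (labelEquiv m k).surjective y
  rcases circulantGraph_one_adj.1 ((circulantGraphIsoWaleckiCycle k).map_adj_iff.1 h) with hb | hb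
  · rw [sub_eq_iff_eq_add'.1 hb]
    exact cycleIndex_label_add_one k a
  · rw [cycleIndex_comm, show a = b + 1 by linear_combination -hb]
    exact cycleIndex_label_add_one k b

theorem isEdgePartitionOfTop_waleckiCycle : IsEdgePartitionOfTop (waleckiCycle m) := by
  intro x y h
  obtain ⟨k, hk⟩ := exists_waleckiCycle_adj h
  exact ⟨k, hk, fun l hl =>
    Fin.ext ((cycleIndex_eq_of_adj hl).symm.trans (cycleIndex_eq_of_adj hk))⟩

end Walecki

open Walecki in
theorem exists_boxProd_cycleGraph_decomposition (n : ℕ) (hn : Odd n) :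
    ∃ f : Fin ((n ^ 2 - 1) / 4) → SimpleGraph (Fin (n ^ 2)),
      (∀ i, Nonempty (f i ≃g cycleGraph n □ cycleGraph n)) ∧
      (Pairwise fun i j => Disjoint (f i) (f j)) ∧ (⨆ i, f i) = ⊤ := by
  obtain ⟨m, rfl⟩ := hn
  rcases eq_or_ne m 0 with rfl | hm
  · refine ⟨fun _ => ⊥, fun i => i.elim0, fun i => i.elim0, ?_⟩
    ext x y
    simp [Fin.ext_iff]
  have : NeZero m := ⟨hm⟩
  have h2 : IsUnit (2 : ZMod (2 * m + 1)) := by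
    simpa using (ZMod.isUnit_iff_coprime 2 (2 * m + 1)).2
      (Nat.coprime_two_left.2 (odd_two_mul_add_one m))
  let c := cycleGraphIsoCirculantGraph (2 * m)
  let w := circulantGraphIsoWaleckiCycle (m := m)
  have hiso : ∀ i, Nonempty (boxTensorFamily (waleckiCycle m) i ≃g
      (cycleGraph (2 * m + 1)).boxProd (cycleGraph (2 * m + 1))) := by
    rintro (k | ⟨k, l⟩)
    · exact ⟨(Iso.boxProdCongr (c.trans (w k)) (c.trans (w k))).symm⟩
    · exact ⟨((Iso.boxProdCongr c c).trans ((circulantGraphOneBoxProdIsoTensorProd h2).trans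
        (Iso.tensorProdCongr (w k) (w l)))).symm⟩
  refine isEdgePartitionOfTop_waleckiCycle.boxTensorFamily.exists_fin_of_card_eq hiso ?_ ?_
  · simp only [Fintype.card_prod, Fintype.card_option, ZMod.card]; ring
  · have : (2 * m + 1) ^ 2 = 4 * (m + m * m) + 1 := by ring
    simp only [Fintype.card_sum, Fintype.card_fin, Fintype.card_prod]; omega

theorem torus_design_prime_squared_general (p : ℕ) (hodd : Odd p) :
    ∃ f : Fin ((p ^ 4 - 1) / 4) → SimpleGraph (Fin (p ^ 4)),
      (∀ i, Nonempty (f i ≃g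
          (SimpleGraph.cycleGraph (p ^ 2) □ SimpleGraph.cycleGraph (p ^ 2)))) ∧
      (Pairwise fun i j => Disjoint (f i) (f j)) ∧
      (⨆ i, f i) = ⊤ := by
  have h := exists_boxProd_cycleGraph_decomposition (p ^ 2) hodd.pow
  rwa [← pow_mul] at h

theorem torus_design_prime_squared (p : ℕ) [Fact p.Prime] (hodd : Odd p) :
    ∃ f : Fin ((p ^ 4 - 1) / 4) → SimpleGraph (Fin (p ^ 4)),
      (∀ i, Nonempty (f i ≃g
          (SimpleGraph.cycleGraph (p ^ 2) □ SimpleGraph.cycleGraph (p ^ 2)))) ∧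
      (Pairwise fun i j => Disjoint (f i) (f j)) ∧
      (⨆ i, f i) = ⊤ :=
  torus_design_prime_squared_general p hodd
end

section
/- For every odd n ≥ 3, the torus grid graph C_n □ C_n can be decomposed into two edge-disjoint Hamiltonian cycles. -/
/-!
Run through the torus row by row, increasing `x`, except that from a point of the antidiagonal
`x + y = -1` step up to the next row instead. Visiting the `t`-th vertex, `t = q * n + r`, at
`(r - q, q)`, this is a single cycle through all `n²` vertices. Its horizontal edges are those not
starting on the antidiagonal and its vertical edges those starting on it, so the transposed cycle
uses exactly the complementary edges.
-/

open SimpleGraph Function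
open scoped Fin.CommRing

namespace SimpleGraph

variable {V : Type*}

theorem cycleGraph_adj_iff_eq_add_one {m : ℕ} [NeZero m] (hm : 2 ≤ m) {u v : Fin m} :
    (cycleGraph m).Adj u v ↔ v = u + 1 ∨ u = v + 1 := by
  obtain ⟨k, rfl⟩ : ∃ k, m = k + 2 := ⟨m - 2, by omega⟩
  rw [cycleGraph_adj, sub_eq_iff_eq_add', sub_eq_iff_eq_add', or_comm]

theorem cycleGraph_exists_isHamiltonianCycle {m : ℕ} (hm : 3 ≤ m) :
    ∃ a, ∃ p : (cycleGraph m).Walk a a, p.IsHamiltonianCycle := by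
  obtain ⟨k, rfl⟩ : ∃ k, m = k + 3 := ⟨m - 3, by omega⟩
  exact ⟨0, cycleGraph.cycle k, Walk.isHamiltonianCycle_iff_isCycle_and_length_eq.mpr
    ⟨cycleGraph.isCycle_cycle, by simp [cycleGraph.length_cycle]⟩⟩

theorem exists_isHamiltonianCycle_fromRel_of_semiconj [DecidableEq V] {m : ℕ} [NeZero m]
    (hm : 3 ≤ m) {f : V → V} {e : Fin m → V} (he : Bijective e) (hef : Semiconj e (· + 1) f) :
    ∃ a, ∃ p : (fromRel fun u v => v = f u).Walk a a, p.IsHamiltonianCycle := by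
  obtain ⟨a, p, hp⟩ := cycleGraph_exists_isHamiltonianCycle hm
  let φ : cycleGraph m →g fromRel fun u v => v = f u :=
    ⟨e, fun {i j} hij => by
      refine (fromRel_adj _ _ _).mpr ⟨he.injective.ne hij.ne, ?_⟩
      rcases (cycleGraph_adj_iff_eq_add_one (by omega)).mp hij with rfl | rfl
      exacts [Or.inl (hef i), Or.inr (hef j)]⟩
  exact ⟨φ a, p.map φ, hp.map (f := φ) he⟩

theorem disjoint_fromRel_eq_apply {f g : V → V} (hfg : ∀ u, f u ≠ g u) (hgf : ∀ u, g (f u) ≠ u) :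
    Disjoint (fromRel fun u v => v = f u) (fromRel fun u v => v = g u) := by
  rw [disjoint_iff]
  ext u v
  simp only [inf_adj, fromRel_adj, bot_adj, iff_false, not_and]
  rintro ⟨-, rfl | rfl⟩ - (h | h)
  exacts [hfg u h, hgf u h.symm, hgf v h.symm, hfg v h]

end SimpleGraph

section Staircase

variable {n : ℕ} [NeZero n]

theorem Fin.add_one_ne_self (hn : 2 ≤ n) (x : Fin n) : x + 1 ≠ x := by
  rw [Ne, add_eq_left, Fin.one_eq_zero_iff]
  omega

theorem Fin.add_one_add_one_ne_self (hn : 3 ≤ n) (x : Fin n) : x + 1 + 1 ≠ x := by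
  rw [Ne, add_assoc, add_eq_left, one_add_one_eq_two, ← Nat.cast_ofNat, Fin.natCast_eq_zero]
  exact fun h => by have := Nat.le_of_dvd two_pos h; omega

def staircaseSucc (p : Fin n × Fin n) : Fin n × Fin n :=
  if p.1 + p.2 + 1 = 0 then (p.1, p.2 + 1) else (p.1 + 1, p.2)

def staircase (a : ℕ) : Fin n × Fin n := ((a : Fin n) - (a / n : ℕ), (a / n : ℕ))

theorem staircase_succ (a : ℕ) : staircase (n := n) (a + 1) = staircaseSucc (staircase a) := by
  have hdiag : (a : Fin n) - (a / n : ℕ) + (a / n : ℕ) + 1 = (a + 1 : ℕ) := by push_cast; ring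
  simp only [staircase, staircaseSucc, hdiag, Fin.natCast_eq_zero, Nat.succ_div]
  split_ifs <;> refine Prod.ext ?_ ?_ <;> push_cast <;> ring

theorem staircase_mod (a : ℕ) : staircase (n := n) (a % (n * n)) = staircase a := by
  conv_rhs => rw [← Nat.mod_add_div a (n * n), mul_assoc, staircase,
    Nat.add_mul_div_left _ _ (NeZero.pos n)]
  simp [staircase]

theorem staircase_injOn : Set.InjOn (staircase (n := n)) (Set.Iio (n * n)) := by
  intro a ha b hb h
  simp only [staircase, Prod.ext_iff] at h
  obtain ⟨hmod, hdiv⟩ := h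
  rw [hdiv, sub_left_inj] at hmod
  simp only [Fin.ext_iff, Fin.val_natCast] at hmod hdiv
  rw [Nat.mod_eq_of_lt (Nat.div_lt_of_lt_mul ha),
    Nat.mod_eq_of_lt (Nat.div_lt_of_lt_mul hb)] at hdiv
  rw [← Nat.div_add_mod a n, ← Nat.div_add_mod b n, hdiv, hmod]

theorem bijective_staircase : Bijective fun t : Fin (n * n) => staircase (n := n) t := by
  rw [Fintype.bijective_iff_injective_and_card]
  exact ⟨fun s t h => Fin.ext (staircase_injOn s.isLt t.isLt h), by simp⟩

theorem semiconj_staircase :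
    Semiconj (fun t : Fin (n * n) => staircase (n := n) t) (· + 1) staircaseSucc := by
  intro t
  simp only [Fin.val_add, Fin.val_one', Nat.add_mod_mod, staircase_mod, staircase_succ]

theorem staircaseSucc_ne_swap (hn : 2 ≤ n) (p : Fin n × Fin n) :
    staircaseSucc p ≠ (staircaseSucc p.swap).swap := by
  obtain ⟨x, y⟩ := p
  simp only [staircaseSucc, Prod.swap, add_comm y x]
  split_ifs <;> simp [Fin.add_one_ne_self hn]

theorem swap_staircaseSucc_swap_staircaseSucc_ne (hn : 3 ≤ n) (p : Fin n × Fin n) :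
    (staircaseSucc (staircaseSucc p).swap).swap ≠ p := by
  have := Fin.add_one_ne_self (by omega : 2 ≤ n)
  have := Fin.add_one_add_one_ne_self hn
  obtain ⟨x, y⟩ := p
  simp only [staircaseSucc, Prod.swap]
  split_ifs <;> simp_all

theorem sup_fromRel_staircaseSucc (hn : 2 ≤ n) :
    (fromRel fun u v => v = staircaseSucc u) ⊔
      (fromRel fun u v => v = (staircaseSucc u.swap).swap) = cycleGraph n □ cycleGraph n := by
  have := Fin.add_one_ne_self hn
  ext ⟨x, y⟩ ⟨x', y'⟩
  simp only [sup_adj, fromRel_adj, boxProd_adj, cycleGraph_adj_iff_eq_add_one hn, staircaseSucc,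
    Prod.swap, add_comm y x, add_comm y' x']
  split_ifs <;> simp only [Prod.mk.injEq, ne_eq] <;> grind

end Staircase

theorem torus_two_hamiltonian_cycles_general (n : ℕ) (hn : 3 ≤ n) :
    ∃ H₁ H₂ : SimpleGraph (Fin n × Fin n),
      Disjoint H₁ H₂ ∧
      H₁ ⊔ H₂ = SimpleGraph.boxProd (SimpleGraph.cycleGraph n) (SimpleGraph.cycleGraph n) ∧
      (∃ (a : Fin n × Fin n) (w : H₁.Walk a a), w.IsHamiltonianCycle) ∧
      (∃ (a : Fin n × Fin n) (w : H₂.Walk a a), w.IsHamiltonianCycle) := by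
  have : NeZero n := ⟨by omega⟩
  have hcard : 3 ≤ n * n := by nlinarith
  refine ⟨fromRel fun u v => v = staircaseSucc u,
    fromRel fun u v => v = (staircaseSucc u.swap).swap,
    disjoint_fromRel_eq_apply (staircaseSucc_ne_swap (by omega))
      (swap_staircaseSucc_swap_staircaseSucc_ne hn),
    sup_fromRel_staircaseSucc (by omega),
    exists_isHamiltonianCycle_fromRel_of_semiconj hcard bijective_staircase semiconj_staircase,
    exists_isHamiltonianCycle_fromRel_of_semiconj hcard
      (Prod.swap_bijective.comp bijective_staircase) fun t => ?_⟩
  simp [semiconj_staircase t]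

theorem torus_two_hamiltonian_cycles (n : ℕ) (hn : 3 ≤ n) (hodd : Odd n) :
    ∃ H₁ H₂ : SimpleGraph (Fin n × Fin n),
      Disjoint H₁ H₂ ∧
      H₁ ⊔ H₂ = SimpleGraph.boxProd (SimpleGraph.cycleGraph n) (SimpleGraph.cycleGraph n) ∧
      (∃ (a : Fin n × Fin n) (w : H₁.Walk a a), w.IsHamiltonianCycle) ∧
      (∃ (a : Fin n × Fin n) (w : H₂.Walk a a), w.IsHamiltonianCycle) :=
  torus_two_hamiltonian_cycles_general n hn
end

section
/- The complete graph K_9 cannot be partitioned into three edge-disjoint subgraphs each isomorphic to P_3 □ P_3. -/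
/-!
The grid `P₃ □ P₃` is bipartite. Recording, for each vertex of `K₉`, its colour class in each of
the three copies gives a proper colouring of their union with `2 ^ 3 = 8` colours, but `K₉`
needs nine.
-/

open SimpleGraph

namespace SimpleGraph

variable {V W ι : Type*}

theorem Colorable.boxProd {G : SimpleGraph V} {H : SimpleGraph W} {n : ℕ}
    (hG : G.Colorable n) (hH : H.Colorable n) : (G □ H).Colorable n := by
  obtain ⟨c⟩ := hG
  obtain ⟨d⟩ := hH
  refine ⟨Coloring.mk (fun p => c p.1 + d p.2) ?_⟩
  rintro ⟨a, b⟩ ⟨a', b'⟩ (⟨hadj, rfl : b = b'⟩ | ⟨hadj, rfl : a = a'⟩) heq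
  · exact c.valid hadj (add_right_cancel heq)
  · exact d.valid hadj (add_left_cancel heq)

theorem Colorable.iSup [Fintype ι] {G : ι → SimpleGraph V} {n : ι → ℕ}
    (hG : ∀ i, (G i).Colorable (n i)) : (⨆ i, G i).Colorable (∏ i, n i) := by
  classical
  let c : (⨆ i, G i).Coloring (∀ i, Fin (n i)) :=
    Coloring.mk (fun v i => (hG i).some v) fun hadj heq => by
      obtain ⟨i, hi⟩ := iSup_adj.mp hadj
      exact (hG i).some.valid hi (congrFun heq i)
  simpa using c.colorable

end SimpleGraph

theorem no_K9_grid_design :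
    ¬ ∃ f : Fin 3 → SimpleGraph (Fin 9),
      (∀ i, Nonempty (f i ≃g (pathGraph 3 □ pathGraph 3))) ∧
      (Pairwise fun i j => Disjoint (f i) (f j)) ∧
      (⨆ i, f i) = ⊤ := by
  rintro ⟨f, hiso, -, hcover⟩
  have hgrid : (pathGraph 3 □ pathGraph 3).Colorable 2 :=
    .boxProd (pathGraph.bicoloring 3).colorable (pathGraph.bicoloring 3).colorable
  have hK9 : (⊤ : SimpleGraph (Fin 9)).Colorable (∏ _ : Fin 3, 2) :=
    hcover ▸ Colorable.iSup fun i => (colorable_congr (hiso i).some).2 hgrid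
  have hK9_chromatic := hK9.chromaticNumber_le
  rw [chromaticNumber_top] at hK9_chromatic
  norm_num at hK9_chromatic
end

section
/- In any partition of K_9 into three edge-disjoint copies of P_3 □ P_3 with center vertices v_1, v_2, v_3, no two of v_1, v_2, v_3 are adjacent in any of the three copies; since v_1, v_2, v_3 are distinct, this contradicts that every pair of vertices of K_9 is adjacent in exactly one copy. -/
/-!
Every vertex of the 3 × 3 grid has degree 2, 3 or 4, and every edge of the grid has an endpoint
of degree 3 (an edge midpoint). In a decomposition of `K₉` into three grids the three degrees of
a vertex add up to 8, so the center `v j` of the `j`-th grid, having degree 4 there, has degree 2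
in the other two. Hence no `v j` has degree 3 in any grid, so no two of them are adjacent in any
grid; but they are distinct, so the pair `v 0, v 1` must be an edge of some grid.
-/

open SimpleGraph

instance : DecidableRel (pathGraph 3).Adj := fun _ _ =>
  decidable_of_iff _ pathGraph_adj.symm

instance : DecidableRel (pathGraph 3 □ pathGraph 3).Adj := fun _ _ =>
  decidable_of_iff _ boxProd_adj.symm

theorem boxProd_pathGraph_three_two_le_degree (a : Fin 3 × Fin 3) :
    2 ≤ (pathGraph 3 □ pathGraph 3).degree a := by
  revert a; decide

theorem boxProd_pathGraph_three_degree_center :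
    (pathGraph 3 □ pathGraph 3).degree (1, 1) = 4 := by
  decide

theorem boxProd_pathGraph_three_degree_eq_three_of_adj {a b : Fin 3 × Fin 3}
    (h : (pathGraph 3 □ pathGraph 3).Adj a b) :
    (pathGraph 3 □ pathGraph 3).degree a = 3 ∨ (pathGraph 3 □ pathGraph 3).degree b = 3 := by
  revert a b; decide

namespace SimpleGraph

theorem sum_degree_eq_of_iSup_eq_top {ι V : Type*} [Fintype ι] [Fintype V] [DecidableEq V]
    {f : ι → SimpleGraph V} [∀ i, DecidableRel (f i).Adj]
    (hdisj : Pairwise fun i j => Disjoint (f i) (f j)) (hcover : ⨆ i, f i = ⊤) (x : V) :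
    ∑ i, (f i).degree x = Fintype.card V - 1 := by
  have hnbr : (⊤ : SimpleGraph V).neighborFinset x =
      Finset.univ.biUnion fun i => (f i).neighborFinset x := by
    ext y
    simp only [mem_neighborFinset, Finset.mem_biUnion, Finset.mem_univ, true_and]
    rw [← iSup_adj, hcover]
  rw [← complete_graph_degree x, ← card_neighborFinset_eq_degree, hnbr, Finset.card_biUnion]
  · simp only [card_neighborFinset_eq_degree]
  · intro i _ j _ hij
    simpa [neighborFinset] using disjoint_neighborSet.mpr (hdisj hij) x

end SimpleGraph

theorem eq_two_of_sum_eq_eight {d : Fin 3 → ℕ} (hd : ∀ i, 2 ≤ d i) (hsum : ∑ i, d i = 8)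
    {i j : Fin 3} (hj : d j = 4) (hij : i ≠ j) : d i = 2 := by
  rw [Fin.sum_univ_three] at hsum
  have := hd 0; have := hd 1; have := hd 2
  fin_cases i <;> fin_cases j <;> simp at hj hij ⊢ <;> omega

theorem center_vertices_contradiction (f : Fin 3 → SimpleGraph (Fin 9))
    (φ : ∀ i, f i ≃g (pathGraph 3 □ pathGraph 3))
    (hdisj : Pairwise fun i j => Disjoint (f i) (f j))
    (hcover : (⨆ i, f i) = ⊤)
    (v : Fin 3 → Fin 9) (hv : ∀ i, v i = (φ i).symm (1, 1)) :
    (∀ i j k : Fin 3, j ≠ k → ¬ (f i).Adj (v j) (v k)) ∧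
      Function.Injective v ∧ False := by
  classical
  have hdeg i x : (f i).degree x = (pathGraph 3 □ pathGraph 3).degree (φ i x) :=
    ((φ i).degree_eq x).symm
  have hsum x : ∑ i, (f i).degree x = 8 := sum_degree_eq_of_iSup_eq_top hdisj hcover x
  have hcenter i : (f i).degree (v i) = 4 := by
    rw [hdeg, hv, RelIso.apply_symm_apply, boxProd_pathGraph_three_degree_center]
  have hcorner i j (hij : i ≠ j) : (f i).degree (v j) = 2 :=
    eq_two_of_sum_eq_eight (fun k => hdeg k _ ▸ boxProd_pathGraph_three_two_le_degree _)
      (hsum (v j)) (hcenter j) hij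
  have hne_three i j : (f i).degree (v j) ≠ 3 := by
    obtain rfl | hij := eq_or_ne i j
    · simp [hcenter]
    · simp [hcorner i j hij]
  have hnonadj : ∀ i j k : Fin 3, j ≠ k → ¬ (f i).Adj (v j) (v k) := fun i j k _ hadj => by
    rcases boxProd_pathGraph_three_degree_eq_three_of_adj ((φ i).map_adj_iff.mpr hadj) with h | h
    · exact hne_three i j (hdeg i _ ▸ h)
    · exact hne_three i k (hdeg i _ ▸ h)
  have hinj : Function.Injective v := fun a b hab => by
    by_contra hab'
    have := hcorner a b hab'
    rw [← hab, hcenter] at this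
    omega
  refine ⟨hnonadj, hinj, ?_⟩
  have htop : (⨆ i, f i).Adj (v 0) (v 1) := hcover ▸ hinj.ne (by decide)
  obtain ⟨i, hi⟩ := iSup_adj.mp htop
  exact hnonadj i 0 1 (by decide) hi
end

section
/- The complete graph K_16 can be partitioned into five edge-disjoint subgraphs, each isomorphic to the 4-by-4 grid graph P_4 □ P_4. -/
/-!
Take the vertices to be a point `∞` together with `ℤ/5 × {0, 1, 2}`, and let `ℤ/5` act by translation
in the first coordinate, fixing `∞`. This action is free on the 120 edges of `K₁₆`, which therefore
fall into 24 orbits of size 5. A copy of the grid whose 24 edges meet each orbit exactly once then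
has five translates that partition the edges of `K₁₆`. The base grid used here is `gridPos⁻¹`: the
bijection `gridPos` assigns each vertex its cell, and the transversal property is a finite check.
-/

open SimpleGraph

namespace SimpleGraph

variable {ι V W : Type*}

instance [DecidableEq V] [DecidableEq W] (G : SimpleGraph V) (H : SimpleGraph W)
    [DecidableRel G.Adj] [DecidableRel H.Adj] : DecidableRel (G □ H).Adj :=
  fun _ _ => decidable_of_iff' _ boxProd_adj

instance (n : ℕ) : DecidableRel (pathGraph n).Adj :=
  fun _ _ => decidable_of_iff' _ pathGraph_adj

theorem pairwise_disjoint_and_iSup_eq_top_of_existsUnique (f : ι → SimpleGraph V)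
    (h : ∀ a b, a ≠ b → ∃! i, (f i).Adj a b) :
    (Pairwise fun i j => Disjoint (f i) (f j)) ∧ (⨆ i, f i) = ⊤ := by
  refine ⟨fun i j hij => disjoint_left.2 fun a b hi hj => hij ?_, ?_⟩
  · exact (h a b hi.ne).unique hi hj
  · ext a b
    simpa only [iSup_adj, top_adj] using ⟨fun ⟨i, hi⟩ => hi.ne, fun hab => (h a b hab).exists⟩

end SimpleGraph

namespace K16

abbrev Vertex := Option (Fin 5 × Fin 3)

def shift (k : Fin 5) : Vertex ≃ Vertex :=
  Equiv.optionCongr ((Equiv.subRight k).prodCongr (Equiv.refl _))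

def gridPos : Vertex → Fin 4 × Fin 4
  | none => (0, 1)
  | some (x, c) =>
    ![![(0, 0), (0, 3), (2, 1), (1, 3), (1, 2)],
      ![(0, 2), (3, 2), (2, 0), (1, 0), (3, 1)],
      ![(1, 1), (3, 3), (2, 3), (3, 0), (2, 2)]] c x

lemma gridPos_bijective : Function.Bijective gridPos := by
  decide

lemma existsUnique_adj_gridPos_shift (a b : Vertex) (hab : a ≠ b) :
    ∃! k : Fin 5,
      (pathGraph 4 □ pathGraph 4).Adj (gridPos (shift k a)) (gridPos (shift k b)) := by
  revert a b
  unfold ExistsUnique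
  decide

end K16

theorem K16_grid_design :
    ∃ f : Fin 5 → SimpleGraph (Fin 16),
      (∀ i, Nonempty (f i ≃g (pathGraph 4 □ pathGraph 4))) ∧
      (Pairwise fun i j => Disjoint (f i) (f j)) ∧
      (⨆ i, f i) = ⊤ := by
  let e : Fin 16 ≃ K16.Vertex := (Fintype.equivFinOfCardEq (α := K16.Vertex) rfl).symm
  let φ (k : Fin 5) : Fin 16 ≃ Fin 4 × Fin 4 :=
    e.trans ((K16.shift k).trans (Equiv.ofBijective K16.gridPos K16.gridPos_bijective))
  refine ⟨fun k => (pathGraph 4 □ pathGraph 4).comap (φ k), fun k => ⟨Iso.comap (φ k) _⟩,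
    pairwise_disjoint_and_iSup_eq_top_of_existsUnique _ fun a b hab => ?_⟩
  exact K16.existsUnique_adj_gridPos_shift (e a) (e b) (e.injective.ne hab)
end

section
/- Let F = F_2[x]/(x^4+x+1), a field of order 16, and let α, β, γ, δ ∈ F form a basis over F_2. The graph on vertex set F with u ~ v iff (u-v = α and u,v ∈ span(α,γ,δ)) or (u-v = β) or (u-v = γ) or (u-v = δ and u,v ∉ span(α,β,δ)) is isomorphic to P_4 □ P_4. -/
/-!
In coordinates with respect to the basis `(α, β, γ, δ)`, membership in `span {α, γ, δ}` means
that the `β`-coordinate vanishes, and non-membership in `span {α, β, δ}` means that the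
`γ`-coordinate is `1`. Hence `α`- and `β`-edges only move the `(α, β)`-coordinates, with `α`-edges
allowed only on the row `β = 0`, and `γ`- and `δ`-edges only move the `(γ, δ)`-coordinates, with
`δ`-edges allowed only on the row `γ = 1`. Each of these is the square `𝔽₂²` with one side removed,
which is a path on four vertices, and the graph is their box product.
-/

open SimpleGraph Polynomial

def diffGraph (R : Type*) {V : Type*} [Ring R] [AddCommGroup V] [Module R V] (α β γ δ : V) :
    SimpleGraph V :=
  fromRel fun u v =>
    (u - v = α ∧ u ∈ Submodule.span R {α, γ, δ} ∧ v ∈ Submodule.span R {α, γ, δ}) ∨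
    u - v = β ∨ u - v = γ ∨
    (u - v = δ ∧ u ∉ Submodule.span R {α, β, δ} ∧ v ∉ Submodule.span R {α, β, δ})

def LinearEquiv.diffGraphIso {R V W : Type*} [Ring R] [AddCommGroup V] [Module R V]
    [AddCommGroup W] [Module R W] (e : V ≃ₗ[R] W) (α β γ δ : V) :
    diffGraph R α β γ δ ≃g diffGraph R (e α) (e β) (e γ) (e δ) where
  toEquiv := e.toEquiv
  map_rel_iff' {u v} := by
    have hsub (u v w : V) : e u - e v = e w ↔ u - v = w := by
      rw [← map_sub, e.injective.eq_iff]
    have hmem (u a b c : V) :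
        e u ∈ Submodule.span R {e a, e b, e c} ↔ u ∈ Submodule.span R {a, b, c} := by
      rw [← Submodule.apply_mem_span_image_iff_mem_span e.injective]
      simp only [Set.image_insert_eq, Set.image_singleton, LinearEquiv.coe_coe]
    simp only [diffGraph, fromRel_adj, LinearEquiv.coe_toEquiv, e.injective.ne_iff, hsub, hmem]

def SimpleGraph.boxProdCongr {α α' β β' : Type*} {G : SimpleGraph α} {G' : SimpleGraph α'}
    {H : SimpleGraph β} {H' : SimpleGraph β'} (f : G ≃g G') (g : H ≃g H') :
    (G □ H) ≃g (G' □ H') where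
  toEquiv := f.toEquiv.prodCongr g.toEquiv
  map_rel_iff' {x y} := by
    simp only [boxProd_adj, Equiv.prodCongr_apply, Prod.map_fst, Prod.map_snd, RelIso.coe_fn_toEquiv,
      f.map_rel_iff, g.map_rel_iff, f.injective.eq_iff, g.injective.eq_iff]

/-- The 4-cycle on `𝔽₂²` with the side `{(0, t + 1), (1, t + 1)}` removed. -/
def squarePath (t : ZMod 2) : SimpleGraph (ZMod 2 × ZMod 2) :=
  fromRel fun p q => p.1 = q.1 ∨ (p.2 = t ∧ q.2 = t)

def squarePathWalk (t : ZMod 2) : Fin 4 → ZMod 2 × ZMod 2 :=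
  ![(0, t + 1), (0, t), (1, t), (1, t + 1)]

theorem squarePathWalk_bijective : ∀ t, Function.Bijective (squarePathWalk t) := by
  decide

theorem squarePath_adj_squarePathWalk : ∀ t a b,
    (squarePath t).Adj (squarePathWalk t a) (squarePathWalk t b) ↔ (pathGraph 4).Adj a b := by
  simp only [squarePath, fromRel_adj, pathGraph_adj]
  decide

noncomputable def pathGraphIsoSquarePath (t : ZMod 2) : pathGraph 4 ≃g squarePath t where
  toEquiv := Equiv.ofBijective (squarePathWalk t) (squarePathWalk_bijective t)
  map_rel_iff' := squarePath_adj_squarePathWalk t _ _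

theorem mem_span_image_pi_single_iff {R ι : Type*} [Semiring R] [Fintype ι] [DecidableEq ι]
    (s : Set ι) (x : ι → R) :
    x ∈ Submodule.span R ((fun i => Pi.single i 1) '' s) ↔ ∀ i ∉ s, x i = 0 := by
  simpa [Set.subset_def, not_imp_comm] using (Pi.basisFun R ι).mem_span_image (m := x) (s := s)

/-- The `(γ, δ)`-coordinates are listed in the order `(δ, γ)`, so that in both factors the edges
present everywhere change the second coordinate. -/
def coordsEquiv : (Fin 4 → ZMod 2) ≃ (ZMod 2 × ZMod 2) × (ZMod 2 × ZMod 2) where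
  toFun r := ((r 0, r 1), (r 3, r 2))
  invFun p := ![p.1.1, p.1.2, p.2.2, p.2.1]
  left_inv r := by ext i; fin_cases i <;> rfl
  right_inv _ := rfl

-- The `Decidable` instance of this 256-case check exceeds the default instance size.
set_option synthInstance.maxSize 2048 in
theorem boxProd_squarePath_adj_coordsEquiv : ∀ r s,
    (squarePath 0 □ squarePath 1).Adj (coordsEquiv r) (coordsEquiv s) ↔
      (diffGraph (ZMod 2) (Pi.single 0 1) (Pi.single 1 1) (Pi.single 2 1) (Pi.single 3 1)).Adj
        r s := by
  have hspan (i j k : Fin 4) :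
      ({Pi.single i 1, Pi.single j 1, Pi.single k 1} : Set (Fin 4 → ZMod 2)) =
        (fun i => Pi.single i 1) '' {i, j, k} := by
    simp only [Set.image_insert_eq, Set.image_singleton]
  simp only [diffGraph, squarePath, fromRel_adj, boxProd_adj, hspan, mem_span_image_pi_single_iff,
    Set.mem_insert_iff, Set.mem_singleton_iff, coordsEquiv]
  decide

def diffGraphPiSingleIsoBoxProd :
    diffGraph (ZMod 2) (Pi.single 0 1 : Fin 4 → ZMod 2) (Pi.single 1 1) (Pi.single 2 1)
      (Pi.single 3 1) ≃g squarePath 0 □ squarePath 1 :=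
  ⟨coordsEquiv, boxProd_squarePath_adj_coordsEquiv _ _⟩

theorem Module.Basis.nonempty_diffGraph_iso_grid {V : Type*} [AddCommGroup V] [Module (ZMod 2) V]
    (b : Module.Basis (Fin 4) (ZMod 2) V) :
    Nonempty (diffGraph (ZMod 2) (b 0) (b 1) (b 2) (b 3) ≃g pathGraph 4 □ pathGraph 4) := by
  have hb (i : Fin 4) : b.equivFun (b i) = Pi.single i 1 := by
    ext j
    simp [Pi.single_apply, eq_comm]
  have hcoords := b.equivFun.diffGraphIso (b 0) (b 1) (b 2) (b 3)
  rw [hb, hb, hb, hb] at hcoords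
  exact ⟨hcoords.trans <| diffGraphPiSingleIsoBoxProd.trans
    (boxProdCongr (pathGraphIsoSquarePath 0) (pathGraphIsoSquarePath 1)).symm⟩

theorem diff_graph_iso_grid4
    (α β γ δ : AdjoinRoot (X ^ 4 + X + 1 : (ZMod 2)[X]))
    (hind : LinearIndependent (ZMod 2) ![α, β, γ, δ])
    (hspan : Submodule.span (ZMod 2) {α, β, γ, δ} = ⊤) :
    Nonempty
      ((SimpleGraph.fromRel
          (fun u v : AdjoinRoot (X ^ 4 + X + 1 : (ZMod 2)[X]) =>
            (u - v = α ∧ u ∈ Submodule.span (ZMod 2) {α, γ, δ} ∧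
                v ∈ Submodule.span (ZMod 2) {α, γ, δ}) ∨
            u - v = β ∨ u - v = γ ∨
            (u - v = δ ∧ u ∉ Submodule.span (ZMod 2) {α, β, δ} ∧
                v ∉ Submodule.span (ZMod 2) {α, β, δ}))) ≃g
        (pathGraph 4 □ pathGraph 4)) := by
  have hrange : Set.range ![α, β, γ, δ] = {α, β, γ, δ} := by
    simp only [Matrix.range_cons, Matrix.range_empty, Set.union_empty, Set.singleton_union]
  let b := Module.Basis.mk hind (hrange ▸ hspan).ge
  have hb : ⇑b = ![α, β, γ, δ] := Module.Basis.coe_mk _ _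
  have hgrid := b.nonempty_diffGraph_iso_grid
  rwa [hb] at hgrid
end

section
/- In F = F_2[x]/(x^4+x+1), for every i with 0 ≤ i ≤ 4, the four elements x^{3i}, x^{13+3i}, x^{11+3i}, x^{3+3i} (exponents mod 15) form a basis of F over F_2. -/
/-!
Since `x ^ 15 = 1`, the `i`-th quadruple is `x ^ (3 * i)` times the quadruple `1, x ^ 13, x ^ 11, x ^ 3`,
and multiplication by the unit `x ^ (3 * i)` is an `𝔽₂`-linear automorphism of `F`. So it suffices
that `1, x ^ 13, x ^ 11, x ^ 3` span `F`; this holds because `x ^ 13 = x ^ 3 + x ^ 2 + 1` and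
`x ^ 11 = x ^ 3 + x ^ 2 + x`. Four spanning vectors of the `4`-dimensional space `F` form a basis.
-/

open Polynomial Module Submodule Set

theorem pow_fifteen_eq_one_of_root {R : Type*} [CommRing R] [CharP R 2] {y : R}
    (hy : y ^ 4 + y + 1 = 0) : y ^ 15 = 1 := by
  grind

theorem Submodule.span_image_mul_right_eq_top {K A : Type*} [CommSemiring K] [Semiring A]
    [Algebra K A] {u : A} (hu : IsUnit u) {s : Set A} (hs : span K s = ⊤) :
    span K ((· * u) '' s) = ⊤ := by
  rw [show (· * u) = LinearMap.mulRight K u from rfl, span_image, hs, map_top,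
    LinearMap.range_eq_top]
  exact (IsUnit.isUnit_iff_mulRight_bijective.mp hu).surjective

theorem AdjoinRoot.span_image_root_pow_eq_top {R : Type*} [CommRing R] {f : R[X]}
    (hf : f.Monic) : span R ((root f ^ ·) '' Iio f.natDegree) = ⊤ := by
  rw [← (powerBasis' hf).basis.span_eq]
  congr 1
  ext z
  simp [Fin.exists_iff]

local notation "𝔽" => AdjoinRoot (X ^ 4 + X + 1 : (ZMod 2)[X])
local notation "ξ" => AdjoinRoot.root (X ^ 4 + X + 1 : (ZMod 2)[X])

theorem monic_X_pow_four_add_X_add_one : (X ^ 4 + X + 1 : (ZMod 2)[X]).Monic := by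
  monicity!

theorem natDegree_X_pow_four_add_X_add_one : (X ^ 4 + X + 1 : (ZMod 2)[X]).natDegree = 4 := by
  compute_degree!

instance : CharP 𝔽 2 :=
  have : Nontrivial 𝔽 := AdjoinRoot.nontrivial _ <| by
    rw [degree_eq_natDegree monic_X_pow_four_add_X_add_one.ne_zero,
      natDegree_X_pow_four_add_X_add_one]
    decide
  charP_of_injective_algebraMap' (ZMod 2) 2

theorem root_pow_four_add_root_add_one : ξ ^ 4 + ξ + 1 = 0 := by
  have h := AdjoinRoot.mk_self (f := (X ^ 4 + X + 1 : (ZMod 2)[X]))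
  rwa [map_add, map_add, map_pow, AdjoinRoot.mk_X, map_one] at h

theorem finrank_adjoinRoot_eq_four : finrank (ZMod 2) 𝔽 = 4 := by
  rw [(AdjoinRoot.powerBasis' monic_X_pow_four_add_X_add_one).finrank]
  exact natDegree_X_pow_four_add_X_add_one

theorem span_one_root_pow_thirteen_eleven_three_eq_top :
    span (ZMod 2) ({1, ξ ^ 13, ξ ^ 11, ξ ^ 3} : Set 𝔽) = ⊤ := by
  have h := root_pow_four_add_root_add_one
  set V := span (ZMod 2) ({1, ξ ^ 13, ξ ^ 11, ξ ^ 3} : Set 𝔽)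
  obtain ⟨h1, h13, h11, h3⟩ : 1 ∈ V ∧ ξ ^ 13 ∈ V ∧ ξ ^ 11 ∈ V ∧ ξ ^ 3 ∈ V := by
    simpa only [insert_subset_iff, singleton_subset_iff, SetLike.mem_coe] using
      (subset_span : _ ⊆ (V : Set 𝔽))
  rw [eq_top_iff, ← AdjoinRoot.span_image_root_pow_eq_top monic_X_pow_four_add_X_add_one,
    natDegree_X_pow_four_add_X_add_one, span_le]
  rintro _ ⟨k, hk : k < 4, rfl⟩
  simp only [SetLike.mem_coe]
  interval_cases k
  · rwa [pow_zero]
  · have : ξ ^ 1 = ξ ^ 11 + ξ ^ 13 + 1 := by grind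
    rw [this]
    exact add_mem (add_mem h11 h13) h1
  · have : ξ ^ 2 = ξ ^ 13 + ξ ^ 3 + 1 := by grind
    rw [this]
    exact add_mem (add_mem h13 h3) h1
  · exact h3

theorem powers_form_basis_general (i : ℕ) :
    LinearIndependent (ZMod 2)
        ![(AdjoinRoot.root (X ^ 4 + X + 1 : (ZMod 2)[X])) ^ (3 * i % 15),
          (AdjoinRoot.root (X ^ 4 + X + 1 : (ZMod 2)[X])) ^ ((13 + 3 * i) % 15),
          (AdjoinRoot.root (X ^ 4 + X + 1 : (ZMod 2)[X])) ^ ((11 + 3 * i) % 15),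
          (AdjoinRoot.root (X ^ 4 + X + 1 : (ZMod 2)[X])) ^ ((3 + 3 * i) % 15)] ∧
      Submodule.span (ZMod 2)
          ({(AdjoinRoot.root (X ^ 4 + X + 1 : (ZMod 2)[X])) ^ (3 * i % 15),
            (AdjoinRoot.root (X ^ 4 + X + 1 : (ZMod 2)[X])) ^ ((13 + 3 * i) % 15),
            (AdjoinRoot.root (X ^ 4 + X + 1 : (ZMod 2)[X])) ^ ((11 + 3 * i) % 15),
            (AdjoinRoot.root (X ^ 4 + X + 1 : (ZMod 2)[X])) ^ ((3 + 3 * i) % 15)} :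
            Set (AdjoinRoot (X ^ 4 + X + 1 : (ZMod 2)[X]))) = ⊤ := by
  have h15 := pow_fifteen_eq_one_of_root root_pow_four_add_root_add_one
  have hu : IsUnit (ξ ^ (3 * i)) := (IsUnit.of_pow_eq_one h15 (by norm_num)).pow _
  simp only [← pow_eq_pow_mod _ h15]
  have hspan : span (ZMod 2)
      ({ξ ^ (3 * i), ξ ^ (13 + 3 * i), ξ ^ (11 + 3 * i), ξ ^ (3 + 3 * i)} : Set 𝔽) = ⊤ := by
    rw [show ({ξ ^ (3 * i), ξ ^ (13 + 3 * i), ξ ^ (11 + 3 * i), ξ ^ (3 + 3 * i)} : Set 𝔽) =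
        (· * ξ ^ (3 * i)) '' {1, ξ ^ 13, ξ ^ 11, ξ ^ 3} by
      simp only [image_insert_eq, image_singleton, one_mul, ← pow_add]]
    exact span_image_mul_right_eq_top hu span_one_root_pow_thirteen_eleven_three_eq_top
  refine ⟨linearIndependent_of_top_le_span_of_card_eq_finrank ?_ ?_, hspan⟩
  · simp only [Matrix.range_cons, Matrix.range_empty, union_empty, singleton_union, hspan,
      le_refl]
  · simp [finrank_adjoinRoot_eq_four]

theorem powers_form_basis (i : ℕ) (hi : i ≤ 4) :
    LinearIndependent (ZMod 2)
        ![(AdjoinRoot.root (X ^ 4 + X + 1 : (ZMod 2)[X])) ^ (3 * i % 15),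
          (AdjoinRoot.root (X ^ 4 + X + 1 : (ZMod 2)[X])) ^ ((13 + 3 * i) % 15),
          (AdjoinRoot.root (X ^ 4 + X + 1 : (ZMod 2)[X])) ^ ((11 + 3 * i) % 15),
          (AdjoinRoot.root (X ^ 4 + X + 1 : (ZMod 2)[X])) ^ ((3 + 3 * i) % 15)] ∧
      Submodule.span (ZMod 2)
          ({(AdjoinRoot.root (X ^ 4 + X + 1 : (ZMod 2)[X])) ^ (3 * i % 15),
            (AdjoinRoot.root (X ^ 4 + X + 1 : (ZMod 2)[X])) ^ ((13 + 3 * i) % 15),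
            (AdjoinRoot.root (X ^ 4 + X + 1 : (ZMod 2)[X])) ^ ((11 + 3 * i) % 15),
            (AdjoinRoot.root (X ^ 4 + X + 1 : (ZMod 2)[X])) ^ ((3 + 3 * i) % 15)} :
            Set (AdjoinRoot (X ^ 4 + X + 1 : (ZMod 2)[X]))) = ⊤ :=
  powers_form_basis_general i
end
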